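/- For all m1, m2, m3, r1, r2, r3 ∈ ℤ, in A: [L_{1/2, m1+1/2}^{r1}, L_{1/2, m2+1/2}^{r2}, L_{1/2, m3+1/2}^{r3}] = (1/2) · W · L_{1/2, m1+m2+m3+1/2}^{r1+r2+r3}, where W is the determinant of the 3×3 matrix with rows (1, 1, 1), (m1, m2, m3), (r1, r2, r3). Hence the 3-W∞ algebra, with basis {W_m^r : m, r ∈ ℤ} and bracket [W_{m1}^{r1}, W_{m2}^{r2}, W_{m3}^{r3}] = W · W_{m1+m2+m3+1}^{r1+r2+r3}, embeds into (A, [·,·,·]) via W_m^r ↦ √2 · L_{1/2, m+1/2}^r when F contains √2. -/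

import Mathlib

noncomputable section

/-- The half-integers `½ℤ = {k/2 : k ∈ ℤ}` as an additive subgroup of `ℚ`. -/
def HalfInt : AddSubgroup ℚ where
  carrier := {q | ∃ k : ℤ, q = k / 2}
  add_mem' := by rintro a b ⟨k, rfl⟩ ⟨j, rfl⟩; exact ⟨k + j, by push_cast; ring⟩
  zero_mem' := ⟨0, by norm_num⟩
  neg_mem' := by rintro a ⟨k, rfl⟩; exact ⟨-k, by push_cast; ring⟩

/-- The half-integer `k/2`. -/
def hh (k : ℤ) : HalfInt := ⟨(k : ℚ) / 2, ⟨k, rfl⟩⟩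

variable (F : Type*) [Field F] [CharZero F]

/-- `A` is the group algebra of `(½ℤ)³` over `F`; the basis element indexed by
`(l, m, r)` is `L_{l,m}^r`. -/
abbrev A := AddMonoidAlgebra F (HalfInt × HalfInt × HalfInt)

/-- The basis element `L_{l,m}^r` of `A`. -/
def L (l m r : HalfInt) : A F := AddMonoidAlgebra.single (l, m, r) 1

/-- `M(α₁,α₂,α₃)`: the determinant of the 3×3 matrix with rows `(r₁,r₂,r₃)`,
`(l₁,l₂,l₃)`, `(m₁,m₂,m₃)`, computed in `ℚ` and mapped into `F`.
Here an index `α = (l, m, r)`. -/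
def Mdet (α β γ : HalfInt × HalfInt × HalfInt) : F :=
  ((Matrix.det !![(α.2.2 : ℚ), (β.2.2 : ℚ), (γ.2.2 : ℚ);
                  (α.1 : ℚ),   (β.1 : ℚ),   (γ.1 : ℚ);
                  (α.2.1 : ℚ), (β.2.1 : ℚ), (γ.2.1 : ℚ)] : ℚ) : F)

/-- The shift `ν = (1, 1, 0)` (in coordinates `(l, m, r)`). -/
def nu : HalfInt × HalfInt × HalfInt := (hh 2, hh 2, hh 0)

/-- The alternating trilinear bracket on `A`, determined on basis elements by
`[L_{l₁,m₁}^{r₁}, L_{l₂,m₂}^{r₂}, L_{l₃,m₃}^{r₃}]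
  = M(α₁,α₂,α₃) · L_{l₁+l₂+l₃-1, m₁+m₂+m₃-1}^{r₁+r₂+r₃}`. -/
def bracket (x y z : A F) : A F :=
  Finsupp.sum x.coeff fun α a => Finsupp.sum y.coeff fun β b => Finsupp.sum z.coeff fun γ c =>
    AddMonoidAlgebra.single (α + β + γ - nu) (a * b * c * Mdet F α β γ)

omit [CharZero F] in
lemma bracket_single (α β γ : HalfInt × HalfInt × HalfInt) (a b c : F) :
    bracket F (AddMonoidAlgebra.single α a) (AddMonoidAlgebra.single β b)
        (AddMonoidAlgebra.single γ c)
      = AddMonoidAlgebra.single (α + β + γ - nu) (a * b * c * Mdet F α β γ) := by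
  simp [bracket, AddMonoidAlgebra.coeff_single, Finsupp.sum_single_index]

omit [CharZero F] in
lemma bracket_smul (a b c : F) (x y z : A F) :
    bracket F (a • x) (b • y) (c • z) = (a * b * c) • bracket F x y z := by
  simp only [bracket, AddMonoidAlgebra.coeff_smul, Finsupp.smul_sum, AddMonoidAlgebra.smul_single']
  simp only [Finsupp.sum_smul_index, mul_zero, zero_mul, AddMonoidAlgebra.single_zero,
    Finsupp.sum_fun_zero, implies_true]
  refine Finsupp.sum_congr fun α _ => Finsupp.sum_congr fun β _ => Finsupp.sum_congr fun γ _ => ?_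
  congr 1
  ring

@[simp]
lemma coe_hh (k : ℤ) : ((hh k : HalfInt) : ℚ) = k / 2 := rfl

lemma hh_add (j k : ℤ) : hh j + hh k = hh (j + k) := by
  ext; push_cast [coe_hh]; ring

lemma hh_sub (j k : ℤ) : hh j - hh k = hh (j - k) := by
  ext; push_cast [coe_hh]; ring

-- Subtract the constant row from the last one, then permute the rows cyclically.
lemma Matrix.det_const_row_shift {R : Type*} [CommRing R] (c m₁ m₂ m₃ r₁ r₂ r₃ : R) :
    !![r₁, r₂, r₃; c, c, c; m₁ + c, m₂ + c, m₃ + c].det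
      = c * !![1, 1, 1; m₁, m₂, m₃; r₁, r₂, r₃].det := by
  simp only [Matrix.det_fin_three, Matrix.of_apply, Matrix.cons_val', Matrix.cons_val_zero,
    Matrix.cons_val_one, Matrix.cons_val_two, Matrix.empty_val', Matrix.cons_val_fin_one,
    Matrix.head_cons, Matrix.tail_cons, Matrix.head_fin_const]
  ring

lemma Mdet_halfShift (m₁ m₂ m₃ r₁ r₂ r₃ : ℤ) :
    Mdet F (hh 1, hh (2 * m₁ + 1), hh (2 * r₁)) (hh 1, hh (2 * m₂ + 1), hh (2 * r₂))
        (hh 1, hh (2 * m₃ + 1), hh (2 * r₃))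
      = (1 / 2 : F) * !![(1 : F), 1, 1; (m₁ : F), m₂, m₃; (r₁ : F), r₂, r₃].det := by
  have hshift (k : ℤ) : ((2 * k + 1 : ℤ) : ℚ) / 2 = k + 1 / 2 := by push_cast; ring
  have hdouble (k : ℤ) : ((2 * k : ℤ) : ℚ) / 2 = k := by push_cast; ring
  simp only [Mdet, coe_hh, hshift, hdouble, Int.cast_one, Matrix.det_const_row_shift]
  simp [Matrix.det_fin_three]

lemma halfShift_add_add_sub_nu (m₁ m₂ m₃ r₁ r₂ r₃ : ℤ) :
    ((hh 1, hh (2 * m₁ + 1), hh (2 * r₁)) : HalfInt × HalfInt × HalfInt)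
        + (hh 1, hh (2 * m₂ + 1), hh (2 * r₂)) + (hh 1, hh (2 * m₃ + 1), hh (2 * r₃)) - nu
      = (hh 1, hh (2 * (m₁ + m₂ + m₃) + 1), hh (2 * (r₁ + r₂ + r₃))) := by
  simp only [nu, Prod.mk_add_mk, Prod.mk_sub_mk, hh_add, hh_sub]
  congr 3 <;> ring

lemma bracket_L_halfShift (m₁ m₂ m₃ r₁ r₂ r₃ : ℤ) :
    bracket F (L F (hh 1) (hh (2 * m₁ + 1)) (hh (2 * r₁)))
        (L F (hh 1) (hh (2 * m₂ + 1)) (hh (2 * r₂))) (L F (hh 1) (hh (2 * m₃ + 1)) (hh (2 * r₃)))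
      = ((1 / 2 : F) * !![(1 : F), 1, 1; (m₁ : F), m₂, m₃; (r₁ : F), r₂, r₃].det) •
          L F (hh 1) (hh (2 * (m₁ + m₂ + m₃) + 1)) (hh (2 * (r₁ + r₂ + r₃))) := by
  simp only [L, bracket_single, halfShift_add_add_sub_nu, Mdet_halfShift,
    AddMonoidAlgebra.smul_single', one_mul, mul_one]

/-- for all `m₁, m₂, m₃, r₁, r₂, r₃ ∈ ℤ`,
`[L_{1/2,m₁+1/2}^{r₁}, L_{1/2,m₂+1/2}^{r₂}, L_{1/2,m₃+1/2}^{r₃}]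
  = (1/2)·W·L_{1/2, m₁+m₂+m₃+1/2}^{r₁+r₂+r₃}`, where `W` is the determinant of the
matrix with rows `(1,1,1)`, `(m₁,m₂,m₃)`, `(r₁,r₂,r₃)`.  Hence the 3-`W∞` algebra
embeds into `(A, [·,·,·])` via `W_m^r ↦ √2·L_{1/2,m+1/2}^r` when `F` contains `√2`. -/
theorem threeWinfty_embeds (m₁ m₂ m₃ r₁ r₂ r₃ : ℤ) :
    bracket F (L F (hh 1) (hh (2 * m₁ + 1)) (hh (2 * r₁)))
              (L F (hh 1) (hh (2 * m₂ + 1)) (hh (2 * r₂)))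
              (L F (hh 1) (hh (2 * m₃ + 1)) (hh (2 * r₃)))
      = ((1 / 2 : F) *
            Matrix.det !![(1 : F), 1, 1;
                          (m₁ : F), (m₂ : F), (m₃ : F);
                          (r₁ : F), (r₂ : F), (r₃ : F)]) •
          L F (hh 1) (hh (2 * (m₁ + m₂ + m₃) + 1)) (hh (2 * (r₁ + r₂ + r₃)))
      ∧ ∀ s : F, s * s = 2 →
          bracket F (s • L F (hh 1) (hh (2 * m₁ + 1)) (hh (2 * r₁)))
                    (s • L F (hh 1) (hh (2 * m₂ + 1)) (hh (2 * r₂)))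
                    (s • L F (hh 1) (hh (2 * m₃ + 1)) (hh (2 * r₃)))
            = (Matrix.det !![(1 : F), 1, 1;
                             (m₁ : F), (m₂ : F), (m₃ : F);
                             (r₁ : F), (r₂ : F), (r₃ : F)]) •
                (s • L F (hh 1) (hh (2 * (m₁ + m₂ + m₃) + 1)) (hh (2 * (r₁ + r₂ + r₃)))) := by
  refine ⟨bracket_L_halfShift F m₁ m₂ m₃ r₁ r₂ r₃, fun s hs => ?_⟩
  rw [bracket_smul, bracket_L_halfShift, smul_smul, smul_smul]
  congr 1
  linear_combination (1 / 2 * !![(1 : F), 1, 1; (m₁ : F), m₂, m₃; (r₁ : F), r₂, r₃].det * s) * hs
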